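/- arXiv:2412.12508 — 4 statements merged into one kernel-verified Lean document; each statement's English description precedes it below -/
import Mathlib

section
/- Let F be a field of characteristic zero, let X be an n-element set, let G be a subgroup of the symmetric group Sym(X), and let Y = {y_1,...,y_m} be an m-element set. Let w_1,...,w_m be indeterminates, set W(f) = ∏_{x∈X} w_{f(x)} for f : X → Y (identifying w(y_i) = w_i), and let w̃ = (∑_{i=1}^m w_i, ∑_{i=1}^m w_i^2, ..., ∑_{i=1}^m w_i^n). Let Δ : G → F be any function. Then ∑_{k∈P_m([n])} ( ∑_{f∈Y^X : W(f)=w^{(k)}} ∑_{σ∈G_f} Δ(σ) ) · w^{(k)} = ∑_{σ∈G} Δ(σ) · Z(σ, w̃), where the equality holds in F[w_1,...,w_m]. -/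
open Finset

open scoped Classical

noncomputable section

/-- `cycleCount σ i` is the number of cycles of length `i` in the cycle decomposition of the
permutation `σ` (fixed points are counted as cycles of length `1`). -/
def cycleCount {X : Type*} [Fintype X] [DecidableEq X] (σ : Equiv.Perm X) (i : ℕ) : ℕ :=
  if i = 1 then Fintype.card X - σ.support.card else σ.cycleType.count i

/-- `Zmon n σ t = t₁^{c₁(σ)} ⋯ t_n^{c_n(σ)}`, the monomial of the cycle index polynomial
associated to `σ`, evaluated at `t = (t₁, …, t_n)`. -/
def Zmon {X : Type*} [Fintype X] [DecidableEq X] {R : Type*} [CommSemiring R] (n : ℕ)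
    (σ : Equiv.Perm X) (t : Fin n → R) : R :=
  ∏ i : Fin n, t i ^ cycleCount σ (i.1 + 1)

namespace PolyaAux

open Equiv Equiv.Perm

variable {X : Type*} [Fintype X] [DecidableEq X] (σ : Equiv.Perm X)

/-- The type of cycles (orbits) of `σ`. -/
abbrev Q := Quotient (Equiv.Perm.SameCycle.setoid σ)

noncomputable instance : Fintype (Q σ) := Fintype.ofFinite _

/-- The orbit (as a finset) corresponding to a class. -/
def cls (q : Q σ) : Finset X := univ.filter (fun x => Quotient.mk (SameCycle.setoid σ) x = q)

lemma mem_cls {q : Q σ} {x : X} : x ∈ cls σ q ↔ Quotient.mk (SameCycle.setoid σ) x = q := by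
  simp [cls]

lemma out_mem_cls (q : Q σ) : q.out ∈ cls σ q := by
  simp [mem_cls, Quotient.out_eq]

lemma card_cls_pos (q : Q σ) : 0 < (cls σ q).card :=
  Finset.card_pos.2 ⟨q.out, out_mem_cls σ q⟩

lemma constant_of_fixed {m : Type*} {f : X → m} (hf : ∀ x, f (σ x) = f x) {x y : X}
    (h : σ.SameCycle x y) : f x = f y := by
  obtain ⟨i, rfl⟩ := h
  have hnat : ∀ (k : ℕ) (z : X), f ((σ ^ k) z) = f z := by
    intro k
    induction k with
    | zero => simp
    | succ k ih => intro z; rw [pow_succ, Equiv.Perm.mul_apply, ih, hf]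
  cases i with
  | ofNat k => rw [Int.ofNat_eq_coe, zpow_natCast, hnat]
  | negSucc k =>
      have : (σ ^ (k + 1)) ((σ ^ Int.negSucc k) x) = x := by
        rw [zpow_negSucc]
        simp
      conv_lhs => rw [← this, hnat]

lemma sameCycle_out (x : X) :
    σ.SameCycle (Quotient.mk (SameCycle.setoid σ) x).out x := by
  have h := Quotient.out_eq (Quotient.mk (SameCycle.setoid σ) x)
  have h2 := Quotient.exact h
  unfold SameCycle.setoid at h2
  exact h2

lemma cls_of_fixed {x : X} (hx : σ x = x) :
    cls σ (Quotient.mk (SameCycle.setoid σ) x) = {x} := by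
  ext y
  simp only [mem_cls, Finset.mem_singleton]
  constructor
  · intro h
    obtain ⟨i, hi⟩ : σ.SameCycle x y := (Quotient.eq.mp h).symm
    rw [zpow_apply_eq_self_of_apply_eq_self hx] at hi
    exact hi.symm
  · rintro rfl; rfl

lemma cls_of_mem_support {x : X} (hx : x ∈ σ.support) :
    cls σ (Quotient.mk (SameCycle.setoid σ) x) = (σ.cycleOf x).support := by
  ext y
  rw [mem_cls, mem_support_cycleOf_iff]
  constructor
  · intro h
    exact ⟨(Quotient.eq.mp h).symm, hx⟩
  · intro h
    exact Quotient.sound h.1.symm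

lemma card_cls_le (q : Q σ) : (cls σ q).card ≤ Fintype.card X :=
  le_trans (Finset.card_le_card (Finset.subset_univ _)) (le_of_eq (Finset.card_univ))

lemma out_notMem_support {q : Q σ} (h : (cls σ q).card = 1) : q.out ∉ σ.support := by
  intro hs
  have h2 : (2 : ℕ) ≤ (σ.cycleOf q.out).support.card :=
    (two_le_card_support_cycleOf_iff).2 (Equiv.Perm.mem_support.1 hs)
  rw [← cls_of_mem_support σ hs, Quotient.out_eq, h] at h2
  omega

lemma card_fiber_one :
    (univ.filter fun q : Q σ => (cls σ q).card = 1).card = Fintype.card X - σ.support.card := by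
  have : Fintype.card X - σ.support.card = (univ \ σ.support).card := by
    rw [Finset.card_sdiff_of_subset (Finset.subset_univ _), Finset.card_univ]
  rw [this]
  apply Finset.card_bij (fun q _ => q.out)
  · intro q hq
    simp only [Finset.mem_filter] at hq
    simp only [Finset.mem_sdiff, Finset.mem_univ, true_and]
    exact out_notMem_support σ hq.2
  · intro q₁ h₁ q₂ h₂ h
    rw [← Quotient.out_eq q₁, ← Quotient.out_eq q₂, h]
  · intro x hx
    simp only [Finset.mem_sdiff, Finset.mem_univ, true_and, Equiv.Perm.mem_support, not_not] at hx
    refine ⟨Quotient.mk _ x, ?_, ?_⟩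
    · simp only [Finset.mem_filter, Finset.mem_univ, true_and]
      rw [cls_of_fixed σ hx]; simp
    · have := out_mem_cls σ (Quotient.mk (SameCycle.setoid σ) x)
      rw [cls_of_fixed σ hx, Finset.mem_singleton] at this
      exact this

lemma card_fiber_of_two_le {i : ℕ} (hi : 2 ≤ i) :
    (univ.filter fun q : Q σ => (cls σ q).card = i).card = σ.cycleType.count i := by
  rw [cycleType_def, Multiset.count_map]
  rw [show (Multiset.filter (fun a => i = (Finset.card ∘ Equiv.Perm.support) a)
      σ.cycleFactorsFinset.1).card
      = (σ.cycleFactorsFinset.filter (fun c => i = c.support.card)).card from rfl]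
  apply Finset.card_bij (fun q _ => σ.cycleOf q.out)
  · intro q hq
    simp only [Finset.mem_filter] at hq ⊢
    have hout : q.out ∈ σ.support := by
      by_contra hns
      have hfix : σ q.out = q.out := by simpa [Equiv.Perm.mem_support, not_not] using hns
      have := cls_of_fixed σ hfix
      rw [Quotient.out_eq] at this
      rw [this, Finset.card_singleton] at hq
      omega
    refine ⟨cycleOf_mem_cycleFactorsFinset_iff.2 hout, ?_⟩
    rw [← cls_of_mem_support σ hout, Quotient.out_eq, hq.2]
  · intro q₁ h₁ q₂ h₂ h
    simp only [Finset.mem_filter] at h₁ h₂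
    have hout : ∀ {q : Q σ}, (cls σ q).card = i → q.out ∈ σ.support := by
      intro q hq
      by_contra hns
      have hfix : σ q.out = q.out := by simpa [Equiv.Perm.mem_support, not_not] using hns
      have := cls_of_fixed σ hfix
      rw [Quotient.out_eq] at this
      rw [this, Finset.card_singleton] at hq
      omega
    have h2 : q₂.out ∈ (σ.cycleOf q₂.out).support :=
      mem_support_cycleOf_iff.2 ⟨SameCycle.refl σ _, hout h₂.2⟩
    rw [← h] at h2
    have hsc : σ.SameCycle q₁.out q₂.out := (mem_support_cycleOf_iff.1 h2).1
    rw [← Quotient.out_eq q₁, ← Quotient.out_eq q₂]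
    exact Quotient.sound hsc
  · intro c hc
    simp only [Finset.mem_filter] at hc
    have hcard : 0 < c.support.card := by omega
    obtain ⟨x, hx⟩ := Finset.card_pos.1 hcard
    have hceq : c = σ.cycleOf x := cycle_is_cycleOf hx hc.1
    have hxs : x ∈ σ.support := mem_cycleFactorsFinset_support_le hc.1 hx
    refine ⟨Quotient.mk _ x, ?_, ?_⟩
    · simp only [Finset.mem_filter, Finset.mem_univ, true_and]
      rw [cls_of_mem_support σ hxs, ← hceq, hc.2]
    · have hsc : σ.SameCycle (Quotient.mk (SameCycle.setoid σ) x).out x := sameCycle_out σ x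
      rw [hsc.cycleOf_eq, ← hceq]

lemma prod_cls {n : ℕ} (hX : Fintype.card X = n) {R : Type*} [CommMonoid R] (t : ℕ → R) :
    ∏ q : Q σ, t (cls σ q).card = ∏ i : Fin n, t (i.1 + 1) ^ cycleCount σ (i.1 + 1) := by
  have hbound : ∀ q : Q σ, (cls σ q).card - 1 < n := by
    intro q
    have := card_cls_le σ q
    have := card_cls_pos σ q
    omega
  set g : Q σ → Fin n := fun q => ⟨(cls σ q).card - 1, hbound q⟩ with hg
  rw [← Finset.prod_fiberwise univ g (fun q => t (cls σ q).card)]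
  apply Finset.prod_congr rfl
  intro i _
  have hmem : ∀ q ∈ univ.filter (fun q => g q = i), t (cls σ q).card = t (i.1 + 1) := by
    intro q hq
    simp only [Finset.mem_filter, hg] at hq
    have h1 := card_cls_pos σ q
    have : (cls σ q).card - 1 = i.1 := congrArg Fin.val hq.2
    congr 1
    omega
  rw [Finset.prod_congr rfl hmem, Finset.prod_const]
  congr 1
  have hfe : (univ.filter fun q => g q = i) = (univ.filter fun q : Q σ => (cls σ q).card = i.1 + 1) := by
    ext q
    simp only [Finset.mem_filter, Finset.mem_univ, true_and, hg]
    have h1 := card_cls_pos σ q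
    constructor
    · intro h; have := congrArg Fin.val h; simp at this; omega
    · intro h; ext; simp; omega
  rw [hfe]
  rcases Nat.eq_zero_or_pos i.1 with h0 | h0
  · rw [cycleCount, if_pos (by omega), show i.1 + 1 = 1 by omega]
    exact card_fiber_one σ
  · rw [cycleCount, if_neg (by omega)]
    exact card_fiber_of_two_le σ (by omega)

lemma fixed_sum (m : ℕ) {R : Type*} [CommSemiring R] (w : Fin m → R) :
    ∑ f ∈ univ.filter (fun f : X → Fin m => ∀ x, f (σ x) = f x), ∏ x, w (f x)
      = ∏ q : Q σ, ∑ j : Fin m, w j ^ (cls σ q).card := by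
  rw [Finset.prod_univ_sum]
  rw [show (Fintype.piFinset fun _ : Q σ => (univ : Finset (Fin m))) = univ from
    Fintype.piFinset_univ]
  have key : ∀ g : Q σ → Fin m,
      ∏ q : Q σ, w (g q) ^ (cls σ q).card = ∏ x : X, w (g (Quotient.mk (SameCycle.setoid σ) x)) := by
    intro g
    rw [← Finset.prod_fiberwise univ (fun x => Quotient.mk (SameCycle.setoid σ) x)
      (fun x => w (g (Quotient.mk (SameCycle.setoid σ) x)))]
    apply Finset.prod_congr rfl
    intro q _
    have : ∀ x ∈ univ.filter (fun x => Quotient.mk (SameCycle.setoid σ) x = q),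
        w (g (Quotient.mk (SameCycle.setoid σ) x)) = w (g q) := by
      intro x hx
      simp only [Finset.mem_filter] at hx
      rw [hx.2]
    rw [Finset.prod_congr rfl this, Finset.prod_const]
    rfl
  rw [Finset.sum_congr rfl (fun g _ => key g)]
  symm
  refine Finset.sum_bij'
    (fun (g : Q σ → Fin m) (_ : g ∈ (univ : Finset (Q σ → Fin m))) =>
      (fun x : X => g (Quotient.mk (SameCycle.setoid σ) x)))
    (fun (f : X → Fin m) (_ : f ∈ univ.filter (fun f : X → Fin m => ∀ x, f (σ x) = f x)) =>
      (fun q : Q σ => f q.out))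
    ?_ (fun f hf => Finset.mem_univ _) ?_ ?_ ?_
  · intro g hg
    simp only [Finset.mem_filter, Finset.mem_univ, true_and]
    intro x
    exact congrArg g (Quotient.sound (⟨-1, by simp⟩ : σ.SameCycle (σ x) x))
  · intro g hg
    funext q
    simp only
    rw [Quotient.out_eq]
  · intro f hf
    simp only [Finset.mem_filter] at hf
    funext x
    exact constant_of_fixed σ hf.2 (sameCycle_out σ x)
  · intro g hg
    rfl

end PolyaAux

lemma prod_X_pow_eq_monomial'' {F : Type*} [CommSemiring F] {m : ℕ} (k : Fin m → ℕ) :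
    (∏ i, (MvPolynomial.X i : MvPolynomial (Fin m) F) ^ k i)
      = MvPolynomial.monomial (Finsupp.equivFunOnFinite.symm k) 1 := by
  rw [MvPolynomial.monomial_eq, map_one, one_mul,
    Finsupp.prod_fintype _ _ (fun i => pow_zero _)]
  simp [Finsupp.equivFunOnFinite]

lemma prod_X_pow_inj {F : Type*} [CommSemiring F] [Nontrivial F] {m : ℕ} {k k' : Fin m → ℕ}
    (h : (∏ i, (MvPolynomial.X i : MvPolynomial (Fin m) F) ^ k i)
      = ∏ i, MvPolynomial.X i ^ k' i) : k = k' := by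
  rw [prod_X_pow_eq_monomial'', prod_X_pow_eq_monomial''] at h
  have h2 := MvPolynomial.monomial_left_injective (one_ne_zero (α := F)) h
  exact Finsupp.equivFunOnFinite.symm.injective h2


/-- **Extended Pólya Enumeration Theorem.**
For any function `Δ : G → F`,
`∑_{k ∈ P_m([n])} (∑_{f : W(f) = w^{(k)}} ∑_{σ ∈ G_f} Δ(σ)) · w^{(k)}
  = ∑_{σ ∈ G} Δ(σ) · Z(σ, w̃)` in `F[w₁, …, w_m]`. -/
theorem extended_polya {F : Type*} [Field F] [CharZero F] (n m : ℕ)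
    (X : Type*) [Fintype X] [DecidableEq X] (hX : Fintype.card X = n)
    (G : Subgroup (Equiv.Perm X)) (Δ : G → F) :
    ∑ k ∈ Finset.Nat.antidiagonalTuple m n,
      (MvPolynomial.C
          (∑ f ∈ univ.filter (fun f : X → Fin m =>
              (∏ x, (MvPolynomial.X (f x) : MvPolynomial (Fin m) F)) =
                ∏ i, MvPolynomial.X i ^ k i),
            ∑ σ ∈ univ.filter (fun σ : G => ∀ x : X, f ((σ : Equiv.Perm X) x) = f x), Δ σ))
        * ∏ i, MvPolynomial.X i ^ k i
      = ∑ σ : G,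
          MvPolynomial.C (Δ σ) *
            Zmon n (σ : Equiv.Perm X)
              (fun j => ∑ i : Fin m, (MvPolynomial.X i : MvPolynomial (Fin m) F) ^ (j.1 + 1)) := by
  have hkey : ∀ f : X → Fin m,
      (∏ x, (MvPolynomial.X (f x) : MvPolynomial (Fin m) F))
        = ∏ i : Fin m, MvPolynomial.X i ^ (univ.filter fun x => f x = i).card := by
    intro f
    rw [← Finset.prod_fiberwise univ f (fun x => (MvPolynomial.X (f x) : MvPolynomial (Fin m) F))]
    apply Finset.prod_congr rfl
    intro i _
    rw [Finset.prod_congr rfl (g := fun _ => (MvPolynomial.X i : MvPolynomial (Fin m) F))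
      (fun x hx => by
        simp only [Finset.mem_filter] at hx
        rw [hx.2]), Finset.prod_const]
  have hfilter : ∀ k : Fin m → ℕ,
      (univ.filter fun f : X → Fin m =>
          (∏ x, (MvPolynomial.X (f x) : MvPolynomial (Fin m) F)) = ∏ i, MvPolynomial.X i ^ k i)
        = univ.filter fun f : X → Fin m =>
            (fun i => (univ.filter fun x => f x = i).card) = k := by
    intro k
    ext f
    simp only [Finset.mem_filter, Finset.mem_univ, true_and]
    constructor
    · intro h
      exact prod_X_pow_inj ((hkey f).symm.trans h)
    · intro h
      rw [hkey f]
      exact congrArg (fun k : Fin m → ℕ => ∏ i, (MvPolynomial.X i : MvPolynomial (Fin m) F) ^ k i) h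
  have hmaps : ∀ f : X → Fin m, ∀ _ : f ∈ (univ : Finset (X → Fin m)),
      (fun i => (univ.filter fun x => f x = i).card) ∈ Finset.Nat.antidiagonalTuple m n := by
    intro f _
    rw [Finset.Nat.mem_antidiagonalTuple, ← hX, ← Finset.card_univ]
    exact (Finset.card_eq_sum_card_fiberwise (fun x _ => Finset.mem_univ (f x))).symm
  trans (∑ f : X → Fin m,
    MvPolynomial.C (∑ σ ∈ univ.filter (fun σ : G => ∀ x : X, f ((σ : Equiv.Perm X) x) = f x), Δ σ)
      * ∏ x, (MvPolynomial.X (f x) : MvPolynomial (Fin m) F))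
  · rw [← Finset.sum_fiberwise_of_maps_to hmaps
      (fun f => MvPolynomial.C
        (∑ σ ∈ univ.filter (fun σ : G => ∀ x : X, f ((σ : Equiv.Perm X) x) = f x), Δ σ)
          * ∏ x, (MvPolynomial.X (f x) : MvPolynomial (Fin m) F))]
    apply Finset.sum_congr rfl
    intro k _
    rw [hfilter k, map_sum, Finset.sum_mul]
    apply Finset.sum_congr rfl
    intro f hf
    simp only [Finset.mem_filter] at hf
    rw [hkey f]
    congr 1
    exact congrArg (fun k : Fin m → ℕ =>
      ∏ i, (MvPolynomial.X i : MvPolynomial (Fin m) F) ^ k i) hf.2.symm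
  · have swap : ∑ f : X → Fin m,
        MvPolynomial.C (∑ σ ∈ univ.filter (fun σ : G => ∀ x : X, f ((σ : Equiv.Perm X) x) = f x), Δ σ)
          * ∏ x, (MvPolynomial.X (f x) : MvPolynomial (Fin m) F)
        = ∑ σ : G, ∑ f ∈ univ.filter (fun f : X → Fin m => ∀ x, f ((σ : Equiv.Perm X) x) = f x),
            MvPolynomial.C (Δ σ) * ∏ x, (MvPolynomial.X (f x) : MvPolynomial (Fin m) F) := by
      simp only [map_sum, Finset.sum_mul, Finset.sum_filter, apply_ite MvPolynomial.C,
        map_zero, ite_mul, zero_mul]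
      exact Finset.sum_comm
    rw [swap]
    apply Finset.sum_congr rfl
    intro σG _
    rw [← Finset.mul_sum]
    congr 1
    rw [PolyaAux.fixed_sum (σG : Equiv.Perm X) m
      (fun j => (MvPolynomial.X j : MvPolynomial (Fin m) F)), Zmon]
    exact PolyaAux.prod_cls (σG : Equiv.Perm X) hX
      (fun d => ∑ i : Fin m, (MvPolynomial.X i : MvPolynomial (Fin m) F) ^ d)
end
end

section
/- Let F be a field of characteristic zero and let L be an n×n matrix over F. For each i ∈ {1,...,n}, set t_i = tr(L^i), and let t = (t_1,...,t_n). Then det(L) = (1/n!) · ∑_{σ∈Sym(n)} sgn(σ) · Z(σ, t), where sgn(σ) is the sign of the permutation σ. -/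
open Finset

open scoped Classical

noncomputable section

/-!
Writing each `tᵢ = tr(Lⁱ)` as a sum over closed walks of length `i`, the monomial `Z(σ, t)`
becomes `∑_{g : [n] → [n]} ∏ₓ L (g x) (g (σ x))`: the walks are glued along the cycles
of `σ`. Summing against `sgn σ` first turns this into `∑_g det (L (g x) (g y))ₓᵧ`; the
determinant vanishes when `g` is not injective (two equal rows) and equals `det L` for each of
the `n!` bijections `g`.
-/

theorem Equiv.Perm.IsCycleOn.exists_equiv_finRotate {Y : Type*} [Fintype Y] {τ : Equiv.Perm Y}
    (hτ : τ.IsCycleOn .univ) {k : ℕ} (hk : Fintype.card Y = k + 1) :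
    ∃ e : Fin (k + 1) ≃ Y, ∀ j, τ (e j) = e (finRotate (k + 1) j) := by
  obtain ⟨y₀⟩ : Nonempty Y := Fintype.card_pos_iff.mp (by omega)
  have hpow (i j : ℕ) : (τ ^ i) y₀ = (τ ^ j) y₀ ↔ i ≡ j [MOD k + 1] := by
    rw [← Finset.coe_univ] at hτ
    simpa [hk] using hτ.pow_apply_eq_pow_apply (Finset.mem_univ y₀)
  have hinj : Function.Injective fun j : Fin (k + 1) => (τ ^ (j : ℕ)) y₀ := fun i j hij =>
    Fin.ext (((hpow i j).mp hij).eq_of_lt_of_lt i.isLt j.isLt)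
  refine ⟨Equiv.ofBijective _ ((Fintype.bijective_iff_injective_and_card _).mpr
    ⟨hinj, by simp [hk]⟩), fun j => ?_⟩
  simp only [Equiv.ofBijective_apply, ← Equiv.Perm.mul_apply, ← pow_succ']
  exact (hpow _ _).mpr (by simp [finRotate_apply, Fin.val_add, Nat.ModEq])

namespace Equiv.Perm

variable {X : Type*} [Fintype X] [DecidableEq X] (σ : Equiv.Perm X)

theorem cycleOf_eq_iff_mem_support {c : Equiv.Perm X} (hc : c ∈ σ.cycleFactorsFinset) {x : X} :
    σ.cycleOf x = c ↔ x ∈ c.support := by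
  refine ⟨fun h => ?_, fun hx => (cycle_is_cycleOf hx hc).symm⟩
  subst h
  exact mem_support_cycleOf_iff.mpr
    ⟨SameCycle.refl σ x, cycleOf_mem_cycleFactorsFinset_iff.mp hc⟩

theorem cycleOf_mem_insert_one_cycleFactorsFinset (x : X) :
    σ.cycleOf x ∈ insert 1 σ.cycleFactorsFinset := by
  by_cases hx : σ x = x
  · simp [hx]
  · simp [cycleOf_mem_cycleFactorsFinset_iff, hx]

theorem card_cycleOf_eq_one :
    Fintype.card {x // σ.cycleOf x = 1} = Fintype.card X - #σ.support := by
  rw [← Finset.card_compl, Fintype.card_subtype]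
  congr 1
  ext x
  simp

theorem card_cycleOf_eq {c : Equiv.Perm X} (hc : c ∈ σ.cycleFactorsFinset) :
    Fintype.card {x // σ.cycleOf x = c} = #c.support := by
  simp only [Fintype.card_subtype, σ.cycleOf_eq_iff_mem_support hc, Finset.filter_mem_eq_inter,
    Finset.univ_inter]

theorem isCycleOn_subtypePerm_cycleOf_eq {c : Equiv.Perm X} (hc : c ∈ σ.cycleFactorsFinset) :
    (σ.subtypePerm (p := fun x => σ.cycleOf x = c) fun x => by simp).IsCycleOn .univ := by
  refine ⟨(Equiv.bijective _).bijOn_univ, fun y _ z _ => SameCycle.subtypePerm ?_⟩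
  have hz : (z : X) ∈ (σ.cycleOf y).support := by
    rw [y.2, ← σ.cycleOf_eq_iff_mem_support hc]
    exact z.2
  exact (mem_support_cycleOf_iff.mp hz).1

theorem prod_map_parts_partition {M : Type*} [CommMonoid M] (f : ℕ → M) :
    (σ.partition.parts.map f).prod =
      f 1 ^ (Fintype.card X - #σ.support) * ∏ c ∈ σ.cycleFactorsFinset, f #c.support := by
  rw [parts_partition, Multiset.map_add, Multiset.prod_add, Multiset.map_replicate,
    Multiset.prod_replicate, mul_comm, cycleType_def, Multiset.map_map]
  rfl

theorem cycleCount_eq_count_parts_partition (k : ℕ) :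
    cycleCount σ k = σ.partition.parts.count k := by
  rw [cycleCount, parts_partition, Multiset.count_add, Multiset.count_replicate]
  rcases eq_or_ne k 1 with rfl | hk
  · rw [Multiset.count_eq_zero.mpr fun h => (one_lt_of_mem_cycleType h).false]
    simp
  · simp [hk, hk.symm]

theorem Zmon_eq_prod_map_parts_partition {R : Type*} [CommSemiring R] {n : ℕ}
    (hn : Fintype.card X ≤ n) (f : ℕ → R) :
    Zmon n σ (fun i => f (i.1 + 1)) = (σ.partition.parts.map f).prod := by
  have hsub : σ.partition.parts.toFinset ⊆ Finset.range (n + 1) := fun k hk => by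
    have := Nat.Partition.le_of_mem_parts (Multiset.mem_toFinset.mp hk)
    exact Finset.mem_range.mpr (by omega)
  have hzero : σ.partition.parts.count 0 = 0 :=
    Multiset.count_eq_zero.mpr fun h => (σ.partition.parts_pos h).false
  rw [Finset.prod_multiset_map_count, Finset.prod_subset hsub fun k _ hk => by
      rw [Multiset.count_eq_zero.mpr (by simpa using hk), pow_zero],
    Finset.prod_range_succ', hzero, pow_zero, mul_one, Zmon, ← Fin.prod_univ_eq_prod_range]
  simp only [cycleCount_eq_count_parts_partition]

end Equiv.Perm

namespace Matrix

variable {ι : Type*} [Fintype ι] {R : Type*} [CommRing R] {X : Type*} [Fintype X] [DecidableEq X]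

theorem det_submatrix_self_eq_sum (L : Matrix X X R) (g : X → X) :
    (L.submatrix g g).det =
      ∑ σ : Equiv.Perm X, ((Equiv.Perm.sign σ : ℤ) : R) * ∏ x, L (g x) (g (σ x)) := by
  rw [← det_transpose, det_apply']
  rfl

theorem sum_det_submatrix_self (L : Matrix X X R) :
    ∑ g : X → X, (L.submatrix g g).det = (Fintype.card X).factorial * L.det := by
  rw [← Finset.sum_subset (Finset.subset_univ (Finset.univ.map
    ⟨((⇑) : Equiv.Perm X → X → X), DFunLike.coe_injective⟩)), Finset.sum_map]
  · simp [det_submatrix_equiv_self, Fintype.card_perm]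
  · intro g _ hg
    obtain ⟨a, b, hab, hne⟩ : ∃ a b, g a = g b ∧ a ≠ b := by
      by_contra! h
      have hg' : Function.Bijective g := Finite.injective_iff_bijective.mp fun a b hab => h a b hab
      exact hg (Finset.mem_map.mpr ⟨Equiv.ofBijective g hg', by simp, rfl⟩)
    exact det_zero_of_row_eq hne (by ext; simp [hab])

/-- The trace of `L^{⊗X}` composed with the permutation of the tensor factors by `σ`. -/
def permTrace (L : Matrix ι ι R) (σ : Equiv.Perm X) : R :=
  ∑ g : X → ι, ∏ x, L (g x) (g (σ x))

theorem sum_sign_mul_permTrace (L : Matrix X X R) :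
    ∑ σ : Equiv.Perm X, ((Equiv.Perm.sign σ : ℤ) : R) * L.permTrace σ =
      (Fintype.card X).factorial * L.det := by
  simp only [permTrace, Finset.mul_sum]
  rw [Finset.sum_comm, ← sum_det_submatrix_self]
  simp only [det_submatrix_self_eq_sum]

theorem permTrace_of_isEmpty [IsEmpty X] (L : Matrix ι ι R) (σ : Equiv.Perm X) :
    L.permTrace σ = 1 := by
  simp [permTrace]

theorem permTrace_one (L : Matrix ι ι R) :
    L.permTrace (1 : Equiv.Perm X) = L.trace ^ Fintype.card X := by
  simp only [permTrace, Equiv.Perm.one_apply, ← Fintype.prod_sum fun (_ : X) i => L i i]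
  simp [trace]

theorem permTrace_eq_of_semiconj {Y : Type*} [Fintype Y] [DecidableEq Y] (L : Matrix ι ι R)
    (e : Y ≃ X) {τ : Equiv.Perm Y} {σ : Equiv.Perm X} (h : ∀ y, σ (e y) = e (τ y)) :
    L.permTrace σ = L.permTrace τ := by
  rw [permTrace, permTrace, ← (e.arrowCongr (Equiv.refl ι)).sum_comp]
  refine Finset.sum_congr rfl fun g _ => ?_
  rw [← e.prod_comp]
  simp [h]

theorem permTrace_eq_prod_permTrace_fiber {Q : Type*} [Fintype Q] [DecidableEq Q]
    (L : Matrix ι ι R) (σ : Equiv.Perm X) (π : X → Q) (hπ : ∀ x, π (σ x) = π x) :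
    L.permTrace σ =
      ∏ q, L.permTrace (σ.subtypePerm (p := fun x => π x = q) fun x => by rw [hπ]) := by
  let e : (X → ι) ≃ ∀ q, {x // π x = q} → ι :=
    ((Equiv.sigmaFiberEquiv π).arrowCongr (Equiv.refl ι)).symm.trans (Equiv.piCurry fun _ _ => ι)
  simp only [permTrace]
  rw [Fintype.prod_sum, ← e.sum_comp]
  refine Finset.sum_congr rfl fun g _ => ?_
  rw [← Fintype.prod_fiberwise π]
  rfl

variable [DecidableEq ι]

theorem trace_pow_mul_eq_sum_prod (L A : Matrix ι ι R) (k : ℕ) :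
    (L ^ k * A).trace =
      ∑ v : Fin (k + 1) → ι,
        (∏ j : Fin k, L (v j.castSucc) (v j.succ)) * A (v (Fin.last k)) (v 0) := by
  induction k generalizing A with
  | zero =>
    rw [pow_zero, one_mul, trace, ← (Equiv.funUnique (Fin 1) ι).symm.sum_comp]
    simp
  | succ k ih =>
    conv_rhs =>
      rw [← (Fin.snocEquiv fun _ => ι).sum_comp, Fintype.sum_prod_type, Finset.sum_comm]
    rw [pow_succ, mul_assoc, ih]
    refine Finset.sum_congr rfl fun w _ => ?_
    simp only [Fin.snocEquiv_apply, Fin.prod_univ_castSucc, Fin.snoc_castSucc, Fin.snoc_last,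
      Fin.succ_castSucc, Fin.succ_last, Fin.snoc_apply_zero, mul_apply, Finset.mul_sum, mul_assoc]

theorem permTrace_finRotate (L : Matrix ι ι R) (k : ℕ) :
    L.permTrace (finRotate (k + 1)) = (L ^ (k + 1)).trace := by
  rw [pow_succ, trace_pow_mul_eq_sum_prod, permTrace]
  refine Finset.sum_congr rfl fun v _ => ?_
  rw [Fin.prod_univ_castSucc, finRotate_last]
  simp

theorem permTrace_of_isCycleOn {Y : Type*} [Fintype Y] [DecidableEq Y] [Nonempty Y]
    (L : Matrix ι ι R) {τ : Equiv.Perm Y} (hτ : τ.IsCycleOn .univ) :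
    L.permTrace τ = (L ^ Fintype.card Y).trace := by
  obtain ⟨k, hk⟩ := Nat.exists_eq_succ_of_ne_zero (Fintype.card_ne_zero (α := Y))
  obtain ⟨e, he⟩ := hτ.exists_equiv_finRotate hk
  rw [permTrace_eq_of_semiconj L e he, permTrace_finRotate, hk]

theorem permTrace_eq_prod_map_parts_partition (L : Matrix ι ι R) (σ : Equiv.Perm X) :
    L.permTrace σ = (σ.partition.parts.map fun k => (L ^ k).trace).prod := by
  have h1 : (1 : Equiv.Perm X) ∉ σ.cycleFactorsFinset := fun h =>
    (Equiv.Perm.mem_cycleFactorsFinset_iff.mp h).1.ne_one rfl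
  rw [σ.prod_map_parts_partition, pow_one,
    permTrace_eq_prod_permTrace_fiber L σ σ.cycleOf σ.cycleOf_self_apply,
    ← Finset.prod_subset (Finset.subset_univ (insert 1 σ.cycleFactorsFinset)),
    Finset.prod_insert h1]
  · congr 1
    · rw [← σ.card_cycleOf_eq_one, ← permTrace_one]
      congr
      ext x
      exact (Equiv.Perm.cycleOf_eq_one_iff σ).mp x.2
    · refine Finset.prod_congr rfl fun c hc => ?_
      obtain ⟨x, hx⟩ := (Equiv.Perm.mem_cycleFactorsFinset_iff.mp hc).1.nonempty_support
      have : Nonempty {x // σ.cycleOf x = c} :=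
        ⟨⟨x, (σ.cycleOf_eq_iff_mem_support hc).mpr hx⟩⟩
      rw [permTrace_of_isCycleOn L (σ.isCycleOn_subtypePerm_cycleOf_eq hc), σ.card_cycleOf_eq hc]
  · intro p _ hp
    have : IsEmpty {x // σ.cycleOf x = p} :=
      ⟨fun x => hp (x.2 ▸ σ.cycleOf_mem_insert_one_cycleFactorsFinset x)⟩
    exact permTrace_of_isEmpty L _

end Matrix

/-- **Amdeberhan's determinant formula.** For an `n × n` matrix `L` with `tᵢ = tr(Lⁱ)`,
`det L = (1/n!) ∑_{σ ∈ Sym(n)} sgn(σ) · Z(σ, t)`. -/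
theorem det_eq_signed_cycle_index {F : Type*} [Field F] [CharZero F] (n : ℕ)
    (L : Matrix (Fin n) (Fin n) F) :
    L.det =
      (n.factorial : F)⁻¹ *
        ∑ σ : Equiv.Perm (Fin n),
          ((Equiv.Perm.sign σ : ℤ) : F) *
            Zmon n σ (fun i => Matrix.trace (L ^ (i.1 + 1))) := by
  have hZ (σ : Equiv.Perm (Fin n)) :
      Zmon n σ (fun i => (L ^ (i.1 + 1)).trace) = L.permTrace σ := by
    rw [σ.Zmon_eq_prod_map_parts_partition (Fintype.card_fin n).le fun k => (L ^ k).trace,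
      L.permTrace_eq_prod_map_parts_partition]
  simp only [hZ]
  rw [L.sum_sign_mul_permTrace, Fintype.card_fin,
    inv_mul_cancel_left₀ (Nat.cast_ne_zero.mpr n.factorial_ne_zero)]

end
end

section
/- Let F be a field of characteristic zero, let X be an n-element set, let G be a subgroup of the symmetric group Sym(X), and let w_1,...,w_m be indeterminates with w̃ = (∑_{i=1}^m w_i, ∑_{i=1}^m w_i^2, ..., ∑_{i=1}^m w_i^n). Let Δ : G → F be any function. Then ∑_{k∈P_m([n])} ( ∑_{α∈k(X)} ∑_{σ∈Sym(α)∩G} Δ(σ) ) · w^{(k)} = ∑_{σ∈G} Δ(σ) · Z(σ, w̃), where the equality holds in F[w_1,...,w_m]. -/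
/-! An ordered partition `(A₁, …, A_m)` of `X` is the same thing as a colouring `f : X → Fin m`
(with `Aᵢ = f⁻¹(i)`), and `σ` stabilizes every block iff `f` is constant on the cycles of `σ`.
Exchanging the sums over `σ` and over partitions, the coefficient of `Δ(σ)` becomes the sum of
`∏ₓ w_{f x}` over the colourings of the cycles of `σ`, which factors as
`∏_{cycles c} (w₁^{|c|} + ⋯ + w_m^{|c|})`; grouping the cycles by length gives `Z(σ, w̃)`. -/

open Finset

open scoped Classical

noncomputable section

namespace Equiv.Perm

variable {X : Type*} [Fintype X]

abbrev Orbits (σ : Perm X) := Quotient (SameCycle.setoid σ)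

def orbitCard (σ : Perm X) (q : Orbits σ) : ℕ := #{x | Quotient.mk _ x = q}

variable {σ : Perm X}

lemma one_le_orbitCard (q : Orbits σ) : 1 ≤ orbitCard σ q := by
  induction q using Quotient.inductionOn with
  | h x => exact card_pos.2 ⟨x, by simp⟩

lemma orbitCard_le (q : Orbits σ) : orbitCard σ q ≤ Fintype.card X := card_le_univ _

lemma apply_eq_of_sameCycle {β : Type*} {f : X → β} (hf : ∀ x, f (σ x) = f x) {x y : X}
    (h : σ.SameCycle x y) : f x = f y := by
  obtain ⟨i, rfl⟩ := h.exists_nat_pow_eq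
  rw [coe_pow]
  exact (congrFun (Function.iterate_invariant (funext hf) i) x).symm

variable [DecidableEq X]

lemma orbitCard_mk_of_mem_support {x : X} (hx : x ∈ σ.support) :
    orbitCard σ (Quotient.mk _ x) = #(σ.cycleOf x).support := by
  unfold orbitCard
  congr 1
  ext y
  simp only [mem_filter, mem_univ, true_and, Quotient.eq, mem_support_cycleOf_iff, hx, and_true]
  exact sameCycle_comm

lemma orbitCard_mk_of_notMem_support {x : X} (hx : x ∉ σ.support) :
    orbitCard σ (Quotient.mk _ x) = 1 := by
  rw [orbitCard, card_eq_one]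
  refine ⟨x, Finset.ext fun y => ?_⟩
  simp only [mem_filter, mem_univ, true_and, mem_singleton, Quotient.eq]
  exact ⟨fun h => (h.symm.eq_of_left (notMem_support.1 hx)).symm, fun h => h ▸ SameCycle.refl _ _⟩

lemma two_le_orbitCard_mk_iff {x : X} : 2 ≤ orbitCard σ (Quotient.mk _ x) ↔ x ∈ σ.support := by
  by_cases hx : x ∈ σ.support
  · simp [orbitCard_mk_of_mem_support hx, two_le_card_support_cycleOf_iff, mem_support.1 hx, hx]
  · simp [orbitCard_mk_of_notMem_support hx, hx]

lemma card_orbitCard_eq_one :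
    #{q : Orbits σ | orbitCard σ q = 1} = Fintype.card X - #σ.support := by
  rw [← card_compl]
  symm
  apply card_nbij (Quotient.mk _)
  · intro x hx
    simp [orbitCard_mk_of_notMem_support (mem_compl.1 hx)]
  · intro x hx y _ hxy
    exact (Quotient.eq.1 hxy).eq_of_left (notMem_support.1 (mem_compl.1 hx))
  · rintro q hq
    induction q using Quotient.inductionOn with
    | h x =>
      refine ⟨x, mem_compl.2 fun hx => ?_, rfl⟩
      have := two_le_orbitCard_mk_iff.2 hx
      simp only [coe_filter, mem_univ, true_and, Set.mem_ofPred_eq] at hq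
      omega

lemma card_orbitCard_eq_of_two_le {j : ℕ} (hj : 2 ≤ j) :
    #{q : Orbits σ | orbitCard σ q = j} = σ.cycleType.count j := by
  rw [cycleType_def, Multiset.count_map]
  change _ = #{c ∈ σ.cycleFactorsFinset | j = #c.support}
  apply card_nbij (Quotient.lift σ.cycleOf fun _ _ (h : σ.SameCycle _ _) => h.cycleOf_eq)
  · rintro ⟨x⟩ hx
    simp only [coe_filter, mem_univ, true_and, Set.mem_ofPred_eq] at hx ⊢
    have hsupp : x ∈ σ.support := two_le_orbitCard_mk_iff.1 (hx ▸ hj)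
    exact ⟨cycleOf_mem_cycleFactorsFinset_iff.2 hsupp, by
      rw [← hx]; exact orbitCard_mk_of_mem_support hsupp⟩
  · rintro ⟨x⟩ hx ⟨y⟩ hy hxy
    simp only [coe_filter, mem_univ, true_and] at hx hy
    have hy' : y ∈ σ.support := two_le_orbitCard_mk_iff.1 (hy ▸ hj)
    have : y ∈ (σ.cycleOf x).support := by
      change σ.cycleOf x = σ.cycleOf y at hxy
      rw [hxy, mem_support_cycleOf_iff]
      exact ⟨SameCycle.refl _ _, hy'⟩
    exact Quotient.sound (mem_support_cycleOf_iff.1 this).1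
  · intro c hc
    simp only [coe_filter, Set.mem_ofPred_eq] at hc
    obtain ⟨hc, hcard⟩ := hc
    obtain ⟨x, hx⟩ := card_pos.1 (show 0 < #c.support by omega)
    have hcx := cycle_is_cycleOf hx hc
    refine ⟨Quotient.mk _ x, ?_, hcx.symm⟩
    have hsupp : x ∈ σ.support := cycleOf_mem_cycleFactorsFinset_iff.1 (hcx ▸ hc)
    simp [orbitCard_mk_of_mem_support hsupp, ← hcx, hcard]

lemma cycleCount_eq_card_orbitCard {j : ℕ} (hj : 1 ≤ j) :
    cycleCount σ j = #{q : Orbits σ | orbitCard σ q = j} := by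
  unfold cycleCount
  split_ifs with h
  · rw [h, card_orbitCard_eq_one]
  · rw [card_orbitCard_eq_of_two_le (by omega)]

lemma Zmon_eq_prod_orbitCard {R : Type*} [CommSemiring R] (p : ℕ → R) :
    Zmon (Fintype.card X) σ (fun i => p (i.1 + 1)) = ∏ q : Orbits σ, p (orbitCard σ q) := by
  rw [Zmon, Fin.prod_univ_eq_prod_range (fun i => p (i + 1) ^ cycleCount σ (i + 1)),
    ← prod_fiberwise_of_maps_to (g := fun q => orbitCard σ q - 1) (t := range (Fintype.card X))
      fun q _ => mem_range.2 (by have := one_le_orbitCard q; have := orbitCard_le q; omega)]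
  refine prod_congr rfl fun i _ => ?_
  rw [cycleCount_eq_card_orbitCard (Nat.le_add_left 1 i), ← prod_const]
  have hfiber (q : Orbits σ) : orbitCard σ q = i + 1 ↔ orbitCard σ q - 1 = i := by
    have := one_le_orbitCard q
    omega
  refine prod_congr (filter_congr fun q _ => hfiber q) fun q hq => ?_
  rw [(hfiber q).2 (mem_filter.1 hq).2]

lemma sum_prod_invariant_eq_prod_orbits {β R : Type*} [Fintype β] [DecidableEq β]
    [CommSemiring R] (w : β → R) :
    ∑ f ∈ {f : X → β | ∀ x, f (σ x) = f x}, ∏ x, w (f x)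
      = ∏ q : Orbits σ, ∑ b, w b ^ orbitCard σ q := by
  have hinv : ({f : X → β | ∀ x, f (σ x) = f x} : Finset _)
      = (univ : Finset (Orbits σ → β)).image (· ∘ Quotient.mk _) := by
    ext f
    simp only [mem_filter, mem_univ, true_and, mem_image]
    refine ⟨fun hf => ⟨Quotient.lift f fun _ _ => apply_eq_of_sameCycle hf, rfl⟩, ?_⟩
    rintro ⟨g, rfl⟩ x
    exact congrArg g (Quotient.sound (sameCycle_apply_left.2 (SameCycle.refl _ _)))
  rw [hinv, sum_image fun _ _ _ _ h => Quotient.mk_surjective.injective_comp_right h,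
    ← sum_prod_piFinset, Fintype.piFinset_univ]
  refine sum_congr rfl fun g _ => ?_
  simp only [Function.comp_apply]
  rw [Finset.prod_comp (fun q => w (g q)), image_univ_of_surjective Quotient.mk_surjective]
  rfl

end Equiv.Perm

section OrderedPartition

variable {X ι : Type*} [Fintype X] [DecidableEq ι]

def fiberFamily (f : X → ι) (i : ι) : Finset X := {x | f x = i}

lemma mem_fiberFamily {f : X → ι} {i : ι} {x : X} : x ∈ fiberFamily f i ↔ f x = i := by
  simp [fiberFamily]

lemma fiberFamily_injective : Function.Injective (fiberFamily : (X → ι) → ι → Finset X) :=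
  fun f g h => funext fun x =>
    (mem_fiberFamily.1 (h ▸ mem_fiberFamily.2 rfl : x ∈ fiberFamily g (f x))).symm

lemma disjoint_fiberFamily (f : X → ι) {i j : ι} (hij : i ≠ j) :
    Disjoint (fiberFamily f i) (fiberFamily f j) :=
  disjoint_left.2 fun _ hi hj => hij ((mem_fiberFamily.1 hi).symm.trans (mem_fiberFamily.1 hj))

lemma sum_card_fiberFamily [Fintype ι] (f : X → ι) : ∑ i, #(fiberFamily f i) = Fintype.card X :=
  (card_eq_sum_card_fiberwise fun x _ => mem_univ (f x)).symm

lemma prod_pow_card_fiberFamily [Fintype ι] {M : Type*} [CommMonoid M] (w : ι → M) (f : X → ι) :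
    ∏ i, w i ^ #(fiberFamily f i) = ∏ x, w (f x) := by
  rw [← prod_fiberwise univ f (fun x => w (f x))]
  refine prod_congr rfl fun i _ => ?_
  rw [fiberFamily, ← prod_const]
  exact prod_congr rfl fun x hx => congrArg w (mem_filter.1 hx).2.symm

lemma exists_fiberFamily_eq [Fintype ι] {A : ι → Finset X}
    (hdisj : ∀ i j, i ≠ j → Disjoint (A i) (A j)) (hcard : ∑ i, #(A i) = Fintype.card X) :
    ∃ f : X → ι, fiberFamily f = A := by
  have hcover : univ.biUnion A = univ :=
    eq_univ_of_card _ ((card_biUnion fun i _ j _ hij => hdisj i j hij).trans hcard)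
  have hmem : ∀ x, ∃ i, x ∈ A i := fun x => by
    obtain ⟨i, -, hi⟩ := mem_biUnion.1 (hcover.symm ▸ mem_univ x)
    exact ⟨i, hi⟩
  choose f hf using hmem
  refine ⟨f, funext fun i => Finset.ext fun x => ⟨fun hx => ?_, fun hx => ?_⟩⟩
  · exact mem_fiberFamily.1 hx ▸ hf x
  · by_contra hne
    exact disjoint_left.1 (hdisj _ _ (Ne.symm (mt mem_fiberFamily.2 hne))) hx (hf x)

lemma stabilizes_fiberFamily_iff (σ : Equiv.Perm X) (f : X → ι) :
    (∀ i, ∀ x ∈ fiberFamily f i, σ x ∈ fiberFamily f i) ↔ ∀ x, f (σ x) = f x := by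
  simp only [mem_fiberFamily]
  exact ⟨fun h x => h _ x rfl, fun h i x hx => (h x).trans hx⟩

lemma sum_antidiagonalTuple_sum_orderedPartition [DecidableEq X] {m : ℕ} {M : Type*}
    [AddCommMonoid M] (φ : (Fin m → Finset X) → M) :
    ∑ k ∈ Finset.Nat.antidiagonalTuple m (Fintype.card X),
      ∑ A ∈ univ.filter (fun A : Fin m → Finset X =>
          (∀ i, #(A i) = k i) ∧ ∀ i j, i ≠ j → Disjoint (A i) (A j)), φ A
      = ∑ f : X → Fin m, φ (fiberFamily f) := by
  rw [← sum_fiberwise_of_maps_to (g := fun f i => #(fiberFamily f i))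
    fun f _ => Nat.mem_antidiagonalTuple.2 (sum_card_fiberFamily f)]
  refine sum_congr rfl fun k hk => ?_
  rw [← sum_image fiberFamily_injective.injOn]
  congr 1
  ext A
  simp only [mem_filter, mem_univ, true_and, mem_image]
  constructor
  · rintro ⟨hcard, hdisj⟩
    have hsum : ∑ i, #(A i) = Fintype.card X := by
      simpa [hcard] using Nat.mem_antidiagonalTuple.1 hk
    obtain ⟨f, rfl⟩ := exists_fiberFamily_eq hdisj hsum
    exact ⟨f, funext hcard, rfl⟩
  · rintro ⟨f, rfl, rfl⟩
    exact ⟨fun i => rfl, fun i j => disjoint_fiberFamily f⟩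

end OrderedPartition

theorem extended_polya_partitions_general {F : Type*} [Field F] (n m : ℕ)
    (X : Type*) [Fintype X] [DecidableEq X] (hX : Fintype.card X = n)
    (G : Subgroup (Equiv.Perm X)) (Δ : G → F) :
    ∑ k ∈ Finset.Nat.antidiagonalTuple m n,
      (MvPolynomial.C
          (∑ A ∈ univ.filter (fun A : Fin m → Finset X =>
              (∀ i, (A i).card = k i) ∧ ∀ i j, i ≠ j → Disjoint (A i) (A j)),
            ∑ σ ∈ univ.filter (fun σ : G => ∀ i, ∀ x ∈ A i, (σ : Equiv.Perm X) x ∈ A i), Δ σ))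
        * ∏ i, (MvPolynomial.X i : MvPolynomial (Fin m) F) ^ k i
      = ∑ σ : G,
          MvPolynomial.C (Δ σ) *
            Zmon n (σ : Equiv.Perm X)
              (fun j => ∑ i : Fin m, (MvPolynomial.X i : MvPolynomial (Fin m) F) ^ (j.1 + 1)) := by
  subst hX
  let w : Fin m → MvPolynomial (Fin m) F := MvPolynomial.X
  calc _ = ∑ k ∈ Finset.Nat.antidiagonalTuple m (Fintype.card X),
          ∑ A ∈ univ.filter (fun A : Fin m → Finset X =>
              (∀ i, (A i).card = k i) ∧ ∀ i j, i ≠ j → Disjoint (A i) (A j)),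
            ∑ σ : G, if ∀ i, ∀ x ∈ A i, (σ : Equiv.Perm X) x ∈ A i
              then MvPolynomial.C (Δ σ) * ∏ i, w i ^ #(A i) else 0 := by
        refine sum_congr rfl fun k _ => ?_
        rw [map_sum, sum_mul]
        refine sum_congr rfl fun A hA => ?_
        rw [map_sum, sum_mul, sum_filter]
        simp only [← (mem_filter.1 hA).2.1, w]
    _ = ∑ f : X → Fin m, ∑ σ : G, if ∀ x, f ((σ : Equiv.Perm X) x) = f x
          then MvPolynomial.C (Δ σ) * ∏ x, w (f x) else 0 := by
        simp only [sum_antidiagonalTuple_sum_orderedPartition, stabilizes_fiberFamily_iff,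
          prod_pow_card_fiberFamily]
    _ = ∑ σ : G, MvPolynomial.C (Δ σ) *
          ∑ f ∈ {f : X → Fin m | ∀ x, f ((σ : Equiv.Perm X) x) = f x}, ∏ x, w (f x) := by
        rw [sum_comm]
        simp only [mul_sum, sum_filter, mul_ite, mul_zero]
    _ = _ := by
        refine sum_congr rfl fun σ _ => ?_
        rw [Equiv.Perm.sum_prod_invariant_eq_prod_orbits,
          Equiv.Perm.Zmon_eq_prod_orbitCard (fun k => ∑ i, w i ^ k)]

/-- **Extended Pólya Enumeration Theorem, partition formulation.**
`∑_{k ∈ P_m([n])} (∑_{α ∈ k(X)} ∑_{σ ∈ Sym(α) ∩ G} Δ(σ)) · w^{(k)}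
  = ∑_{σ ∈ G} Δ(σ) · Z(σ, w̃)` in `F[w₁, …, w_m]`, where `k(X)` is the set of tuples
`(A₁, …, A_m)` of pairwise disjoint subsets of `X` with `|Aᵢ| = kᵢ`, and `Sym(α)` is the
subgroup of permutations stabilizing each block `Aᵢ` setwise. -/
theorem extended_polya_partitions {F : Type*} [Field F] [CharZero F] (n m : ℕ)
    (X : Type*) [Fintype X] [DecidableEq X] (hX : Fintype.card X = n)
    (G : Subgroup (Equiv.Perm X)) (Δ : G → F) :
    ∑ k ∈ Finset.Nat.antidiagonalTuple m n,
      (MvPolynomial.C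
          (∑ A ∈ univ.filter (fun A : Fin m → Finset X =>
              (∀ i, (A i).card = k i) ∧ ∀ i j, i ≠ j → Disjoint (A i) (A j)),
            ∑ σ ∈ univ.filter (fun σ : G => ∀ i, ∀ x ∈ A i, (σ : Equiv.Perm X) x ∈ A i), Δ σ))
        * ∏ i, (MvPolynomial.X i : MvPolynomial (Fin m) F) ^ k i
      = ∑ σ : G,
          MvPolynomial.C (Δ σ) *
            Zmon n (σ : Equiv.Perm X)
              (fun j => ∑ i : Fin m, (MvPolynomial.X i : MvPolynomial (Fin m) F) ^ (j.1 + 1)) :=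
  extended_polya_partitions_general n m X hX G Δ
end
end

section
/- Let F be a field of characteristic zero, let X be an n-element set, let G be a subgroup of the symmetric group Sym(X), and let Y = {y_1,...,y_m} be an m-element set. With W(f) = ∏_{x∈X} w_{f(x)} for f : X → Y, w̃ = (∑_{i=1}^m w_i, ∑_{i=1}^m w_i^2, ..., ∑_{i=1}^m w_i^n), and a_k the number of G-orbits O on Y^X with W(O) = w^{(k)}, one has ∑_{k∈P_m([n])} a_k · w^{(k)} = (1/|G|) · ∑_{σ∈G} Z(σ, w̃) in F[w_1,...,w_m] (the weighted Pólya Enumeration Theorem). -/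
open Finset

open scoped Classical

noncomputable section

/-
A colouring `f : X → Y` is fixed by `σ` exactly when it is constant on the cycles of `σ`, so the
weights of the `σ`-fixed colourings sum to `∏_{cycles c} (∑ᵢ wᵢ^|c|) = Z(σ, w̃)`. Summing over `G`
and swapping the sums, each colouring `f` is counted `|Stab f|` times, and the stabilisers along
an orbit have `∑_{g ∈ O} |Stab g| = |G|`; this weighted Burnside lemma turns `∑_σ Z(σ, w̃)` into
`|G| ∑_O W(O)`. Finally, distinct exponent vectors give distinct monomials, so the orbits of weight
`w^(k)` are exactly those counted by `a_k`.
-/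

namespace MulAction

variable {G α M : Type*} [Group G] [Fintype G] [MulAction G α] [Fintype α] [DecidableEq α]
  [AddCommMonoid M]

theorem sum_card_stabilizer_orbit_eq_card (b : α) :
    ∑ a ∈ (orbit G b).toFinset, Fintype.card (stabilizer G a) = Fintype.card G := by
  have hstab : ∀ a ∈ (orbit G b).toFinset,
      Fintype.card (stabilizer G a) = Fintype.card (stabilizer G b) := fun a ha =>
    Fintype.card_congr (stabilizerEquivStabilizerOfOrbitRel
      (orbitRel_apply.mpr (Set.mem_toFinset.mp ha))).toEquiv
  rw [sum_congr rfl hstab, sum_const, Set.toFinset_card, smul_eq_mul,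
    card_orbit_mul_card_stabilizer_eq_card_group]

theorem sum_sum_fixedBy_eq_card_smul_sum_orbits (φ : Finset α → M) :
    ∑ g : G, ∑ a ∈ univ.filter (fun a => g • a = a), φ (orbit G a).toFinset
      = Fintype.card G • ∑ O ∈ univ.image (fun a => (orbit G a).toFinset), φ O := by
  calc ∑ g : G, ∑ a ∈ univ.filter (fun a => g • a = a), φ (orbit G a).toFinset
      = ∑ a, Fintype.card (stabilizer G a) • φ (orbit G a).toFinset := by
        simp_rw [sum_filter]
        rw [sum_comm]
        refine sum_congr rfl fun a _ => ?_
        rw [← sum_filter, sum_const, ← Fintype.card_subtype]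
        rfl
    _ = ∑ O ∈ univ.image (fun a => (orbit G a).toFinset),
          ∑ a ∈ univ.filter (fun a => (orbit G a).toFinset = O),
            Fintype.card (stabilizer G a) • φ O := by
        rw [← sum_fiberwise_of_maps_to (g := fun a => (orbit G a).toFinset)
          (fun a _ => mem_image_of_mem _ (mem_univ a))]
        exact sum_congr rfl fun O _ => sum_congr rfl fun a ha => by rw [(mem_filter.mp ha).2]
    _ = Fintype.card G • ∑ O ∈ univ.image (fun a => (orbit G a).toFinset), φ O := by
        rw [smul_sum]
        refine sum_congr rfl fun O hO => ?_
        obtain ⟨b, -, rfl⟩ := mem_image.mp hO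
        have hfiber : univ.filter (fun a => (orbit G a).toFinset = (orbit G b).toFinset)
            = (orbit G b).toFinset := by
          ext a
          simp [orbit_eq_iff]
        rw [hfiber, ← sum_smul, sum_card_stabilizer_orbit_eq_card]

end MulAction

namespace Equiv.Perm

variable {X : Type*} [Fintype X] (σ : Perm X)

def cycleCard (q : Quotient (SameCycle.setoid σ)) : ℕ :=
  #{x | Quotient.mk (SameCycle.setoid σ) x = q}

variable {σ}

theorem one_le_cycleCard (q : Quotient (SameCycle.setoid σ)) : 1 ≤ σ.cycleCard q :=
  card_pos.mpr ⟨q.out, by simp [Quotient.out_eq]⟩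

theorem cycleCard_le_card (q : Quotient (SameCycle.setoid σ)) :
    σ.cycleCard q ≤ Fintype.card X :=
  card_filter_le _ _

variable [DecidableEq X]

theorem cycleCard_mk (x : X) :
    σ.cycleCard (Quotient.mk _ x) = #{y | σ.SameCycle x y} := by
  refine congrArg card (filter_congr fun y _ => ?_)
  rw [Quotient.eq]
  exact sameCycle_comm

theorem cycleCard_mk_of_apply_eq_self {x : X} (hx : σ x = x) :
    σ.cycleCard (Quotient.mk _ x) = 1 := by
  rw [cycleCard_mk, card_eq_one]
  refine ⟨x, eq_singleton_iff_unique_mem.mpr ⟨by simp [SameCycle.refl], fun y hy => ?_⟩⟩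
  exact ((mem_filter.mp hy).2.eq_of_left hx).symm

theorem cycleCard_mk_of_apply_ne_self {x : X} (hx : σ x ≠ x) :
    σ.cycleCard (Quotient.mk _ x) = #(σ.cycleOf x).support := by
  rw [cycleCard_mk]
  congr 1
  ext y
  rw [mem_filter, mem_support_cycleOf_iff]
  simp [hx]

theorem apply_ne_self_of_two_le_cycleCard {x : X} (hx : 2 ≤ σ.cycleCard (Quotient.mk _ x)) :
    σ x ≠ x := fun h => by
  rw [cycleCard_mk_of_apply_eq_self h] at hx
  omega

variable (σ)

theorem card_filter_cycleCard_eq_one :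
    #{q | σ.cycleCard q = 1} = Fintype.card X - #σ.support := by
  have hcard_fixed : #{x | σ x = x} = Fintype.card X - #σ.support := by
    rw [← card_compl]
    congr 1
    ext x
    simp
  rw [← hcard_fixed]
  refine (card_bij (fun x _ => Quotient.mk _ x) ?_ ?_ ?_).symm
  · intro x hx
    simpa using cycleCard_mk_of_apply_eq_self (mem_filter.mp hx).2
  · intro x hx y _ hxy
    exact (Quotient.exact hxy).eq_of_left (mem_filter.mp hx).2
  · intro q hq
    induction q using Quotient.inductionOn with | h x => ?_
    refine ⟨x, mem_filter.mpr ⟨mem_univ x, ?_⟩, rfl⟩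
    by_contra hx
    have := (mem_filter.mp hq).2
    rw [cycleCard_mk_of_apply_ne_self hx] at this
    have := (two_le_card_support_cycleOf_iff).mpr hx
    omega

theorem card_filter_cycleCard_eq_count_cycleType {ℓ : ℕ} (hℓ : 2 ≤ ℓ) :
    #{q | σ.cycleCard q = ℓ} = σ.cycleType.count ℓ := by
  have hcount : σ.cycleType.count ℓ = #{c ∈ σ.cycleFactorsFinset | #c.support = ℓ} := by
    rw [cycleType_def, Multiset.count_map]
    simp only [Finset.card, Function.comp_def]
    exact congrArg _ (Multiset.filter_congr fun c _ => eq_comm)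
  rw [hcount]
  refine card_bij (fun q _ => Quotient.lift σ.cycleOf (fun _ _ => SameCycle.cycleOf_eq) q)
    ?_ ?_ ?_
  · intro q hq
    induction q using Quotient.inductionOn with | h x => ?_
    replace hq : σ.cycleCard (Quotient.mk _ x) = ℓ := (mem_filter.mp hq).2
    have hx := apply_ne_self_of_two_le_cycleCard (hq ▸ hℓ)
    refine mem_filter.mpr ⟨cycleOf_mem_cycleFactorsFinset_iff.mpr (mem_support.mpr hx), ?_⟩
    rw [Quotient.lift_mk, ← cycleCard_mk_of_apply_ne_self hx, hq]
  · intro q₁ hq₁ q₂ hq₂ heq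
    induction q₁ using Quotient.inductionOn with | h x => ?_
    induction q₂ using Quotient.inductionOn with | h y => ?_
    have hy := apply_ne_self_of_two_le_cycleCard ((mem_filter.mp hq₂).2 ▸ hℓ)
    have hmem : y ∈ (σ.cycleOf x).support := by
      rw [show σ.cycleOf x = σ.cycleOf y from heq]
      exact mem_support_cycleOf_iff.mpr ⟨SameCycle.refl _ _, mem_support.mpr hy⟩
    exact Quotient.sound (mem_support_cycleOf_iff.mp hmem).1
  · intro c hc
    obtain ⟨hmem, hcard⟩ := mem_filter.mp hc
    obtain ⟨x, hx⟩ := card_pos.mp (show 0 < #c.support by omega)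
    have hceq : c = σ.cycleOf x := cycle_is_cycleOf hx hmem
    have hxσ : σ x ≠ x := mem_support.mp (mem_cycleFactorsFinset_support_le hmem hx)
    refine ⟨Quotient.mk _ x, mem_filter.mpr ⟨mem_univ _, ?_⟩, hceq.symm⟩
    rw [cycleCard_mk_of_apply_ne_self hxσ, ← hceq, hcard]

theorem card_filter_cycleCard_eq_cycleCount {ℓ : ℕ} (hℓ : 1 ≤ ℓ) :
    #{q | σ.cycleCard q = ℓ} = cycleCount σ ℓ := by
  rcases hℓ.eq_or_lt with rfl | hℓ
  · rw [cycleCount, if_pos rfl, card_filter_cycleCard_eq_one]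
  · rw [cycleCount, if_neg hℓ.ne', card_filter_cycleCard_eq_count_cycleType σ hℓ]

theorem prod_cycleCard_eq_Zmon {R : Type*} [CommSemiring R] {n : ℕ}
    (hX : Fintype.card X = n) (p : ℕ → R) :
    ∏ q, p (σ.cycleCard q) = Zmon n σ (fun j => p (j.1 + 1)) := by
  have hmaps : ∀ q ∈ (univ : Finset (Quotient (SameCycle.setoid σ))),
      σ.cycleCard q - 1 ∈ range n := fun q _ => by
    have := one_le_cycleCard q
    have := cycleCard_le_card q
    rw [mem_range]
    omega
  have hfiber : ∀ i, #{q | σ.cycleCard q - 1 = i} = cycleCount σ (i + 1) := fun i => by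
    rw [← card_filter_cycleCard_eq_cycleCount σ (Nat.le_add_left 1 i)]
    congr 1
    exact filter_congr fun q _ => by have := one_le_cycleCard q; omega
  calc ∏ q, p (σ.cycleCard q)
      = ∏ q, p (σ.cycleCard q - 1 + 1) :=
        prod_congr rfl fun q _ => by rw [Nat.sub_add_cancel (one_le_cycleCard q)]
    _ = ∏ i ∈ range n, p (i + 1) ^ #{q | σ.cycleCard q - 1 = i} := by
        rw [← prod_fiberwise_of_maps_to' hmaps (fun i => p (i + 1))]
        exact prod_congr rfl fun i _ => prod_const _
    _ = Zmon n σ (fun j => p (j.1 + 1)) := by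
        rw [Zmon, Fin.prod_univ_eq_prod_range (fun i => p (i + 1) ^ cycleCount σ (i + 1))]
        exact prod_congr rfl fun i _ => by rw [hfiber]

end Equiv.Perm

section ArrowAction

attribute [local instance] arrowAction

theorem Equiv.Perm.apply_eq_apply_of_smul_eq_self {X Y : Type*} {σ : Equiv.Perm X} {f : X → Y}
    (hf : σ • f = f) {x y : X} (h : σ.SameCycle x y) : f x = f y := by
  obtain ⟨i, rfl⟩ := h
  have hi : (σ ^ (-i)) • f = f := (MulAction.stabilizer _ f).zpow_mem hf (-i)
  have : f ((σ ^ (-i))⁻¹ • x) = f x := congrFun hi x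
  rwa [zpow_neg, inv_inv, Perm.smul_def, eq_comm] at this

theorem Equiv.Perm.sum_fixed_prod_eq_prod_sum_pow {X Y R : Type*} [Fintype X] [DecidableEq X]
    [Fintype Y] [DecidableEq Y] [CommSemiring R] (σ : Equiv.Perm X) (w : Y → R) :
    ∑ f ∈ univ.filter (fun f : X → Y => σ • f = f), ∏ x, w (f x)
      = ∏ q, ∑ y, w y ^ σ.cycleCard q := by
  let mk := Quotient.mk (SameCycle.setoid σ)
  calc ∑ f ∈ univ.filter (fun f : X → Y => σ • f = f), ∏ x, w (f x)
      = ∑ g : Quotient (SameCycle.setoid σ) → Y, ∏ x, w (g (mk x)) := by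
        refine (sum_nbij' (fun g => g ∘ mk) (fun f q => f q.out) ?_ ?_ ?_ ?_ ?_).symm
        · intro g _
          refine mem_filter.mpr ⟨mem_univ _, funext fun x => ?_⟩
          show g (mk (σ⁻¹ x)) = g (mk x)
          exact congrArg g (Quotient.sound ⟨1, by simp⟩)
        · exact fun f _ => mem_univ _
        · intro g _
          exact funext fun q => congrArg g (Quotient.out_eq q)
        · intro f hf
          exact funext fun x => apply_eq_apply_of_smul_eq_self (mem_filter.mp hf).2
            (Quotient.exact (Quotient.out_eq (mk x)))
        · exact fun g _ => rfl
    _ = ∑ g : Quotient (SameCycle.setoid σ) → Y, ∏ q, w (g q) ^ σ.cycleCard q := by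
        refine sum_congr rfl fun g _ => ?_
        rw [← prod_fiberwise' univ mk (fun q => w (g q))]
        exact prod_congr rfl fun q _ => prod_const _
    _ = ∏ q, ∑ y, w y ^ σ.cycleCard q := (Fintype.prod_sum fun q y => w y ^ σ.cycleCard q).symm

theorem Equiv.Perm.sum_fixed_prod_eq_Zmon {X Y R : Type*} [Fintype X] [DecidableEq X]
    [Fintype Y] [DecidableEq Y] [CommSemiring R] {n : ℕ} (hX : Fintype.card X = n)
    (σ : Equiv.Perm X) (w : Y → R) :
    ∑ f ∈ univ.filter (fun f : X → Y => σ • f = f), ∏ x, w (f x)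
      = Zmon n σ (fun j => ∑ y, w y ^ (j.1 + 1)) := by
  rw [sum_fixed_prod_eq_prod_sum_pow]
  exact prod_cycleCard_eq_Zmon σ hX fun ℓ => ∑ y, w y ^ ℓ

theorem MulAction.prod_apply_smul {G X Y M : Type*} [Group G] [MulAction G X] [Fintype X]
    [CommMonoid M] (w : Y → M) (g : G) (f : X → Y) : ∏ x, w ((g • f) x) = ∏ x, w (f x) :=
  Fintype.prod_equiv (MulAction.toPerm g⁻¹) _ (fun x => w (f x)) fun _ => rfl

theorem Subgroup.filter_exists_comp_eq_toFinset_orbit {X Y : Type*} [Fintype X] [DecidableEq X]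
    [Fintype Y] [DecidableEq Y] (G : Subgroup (Equiv.Perm X)) (f : X → Y) :
    univ.filter (fun g => ∃ σ : G, g = f ∘ σ) = (MulAction.orbit G f).toFinset := by
  ext g
  simp only [mem_filter, mem_univ, true_and, Set.mem_toFinset, MulAction.mem_orbit_iff]
  constructor
  · rintro ⟨σ, rfl⟩
    exact ⟨σ⁻¹, rfl⟩
  · rintro ⟨σ, rfl⟩
    exact ⟨σ⁻¹, rfl⟩

end ArrowAction

theorem Fintype.prod_comp_eq_prod_pow_card_fiber {α β M : Type*} [Fintype α] [Fintype β]
    [DecidableEq β] [CommMonoid M] (f : β → M) (g : α → β) :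
    ∏ a, f (g a) = ∏ b, f b ^ #{a | g a = b} := by
  rw [← Finset.prod_fiberwise' univ g f]
  exact Finset.prod_congr rfl fun b _ => Finset.prod_const _

namespace MvPolynomial

variable {R : Type*} [CommSemiring R] [Nontrivial R]

theorem prod_X_pow_injective {ι : Type*} [Fintype ι] :
    Function.Injective fun k : ι → ℕ => ∏ i, (X i : MvPolynomial ι R) ^ k i := by
  intro k k' h
  have hmono : ∀ k : ι → ℕ,
      ∏ i, (X i : MvPolynomial ι R) ^ k i = monomial (Finsupp.equivFunOnFinite.symm k) 1 :=
    fun k => by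
      rw [monomial_eq, C_1, one_mul, Finsupp.prod_fintype _ _ fun _ => pow_zero _]
      rfl
  simp only [hmono] at h
  exact Finsupp.equivFunOnFinite.symm.injective ((monomial_left_inj one_ne_zero).mp h)

theorem sum_antidiagonalTuple_ite_exists_prod_X {α : Type*} [Fintype α] {m n : ℕ}
    (hα : Fintype.card α = n) {O : Finset (α → Fin m)} {f₀ : α → Fin m} (hf₀ : f₀ ∈ O)
    (hO : ∀ f ∈ O, ∏ a, (X (f a) : MvPolynomial (Fin m) R) = ∏ a, X (f₀ a)) :
    ∑ k ∈ Nat.antidiagonalTuple m n,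
        (if ∃ f ∈ O, ∏ a, (X (f a) : MvPolynomial (Fin m) R) = ∏ i, X i ^ k i
          then ∏ i, (X i : MvPolynomial (Fin m) R) ^ k i else 0)
      = ∏ a, X (f₀ a) := by
  set c : Fin m → ℕ := fun i => #{a | f₀ a = i}
  have hf₀c : ∏ a, (X (f₀ a) : MvPolynomial (Fin m) R) = ∏ i, X i ^ c i :=
    Fintype.prod_comp_eq_prod_pow_card_fiber _ _
  have hc : c ∈ Nat.antidiagonalTuple m n := by
    rw [Nat.mem_antidiagonalTuple, ← hα, ← card_univ,
      card_eq_sum_card_fiberwise fun a _ => mem_univ (f₀ a)]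
  have hiff : ∀ k : Fin m → ℕ,
      (∃ f ∈ O, ∏ a, (X (f a) : MvPolynomial (Fin m) R) = ∏ i, X i ^ k i) ↔ c = k :=
    fun k => ⟨fun ⟨f, hf, hk⟩ =>
      prod_X_pow_injective (hf₀c.symm.trans ((hO f hf).symm.trans hk)),
      fun hk => ⟨f₀, hf₀, hk ▸ hf₀c⟩⟩
  simp_rw [hiff]
  rw [sum_ite_eq, if_pos hc, hf₀c]

end MvPolynomial

/-- **Weighted Pólya Enumeration Theorem.** With `a_k` the number of `G`-orbits `O` on `Y^X`
(where `σ` sends `f` to `x ↦ f(x^σ)`) whose weight is `w^{(k)}`, one has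
`∑_{k ∈ P_m([n])} a_k · w^{(k)} = (1/|G|) ∑_{σ ∈ G} Z(σ, w̃)` in `F[w₁, …, w_m]`.
Orbits are encoded as the finsets `{f ∘ σ : σ ∈ G}` for `f : X → Fin m`, and the weight of an
orbit is `W(f)` for any member `f` of the orbit. -/
theorem weighted_polya {F : Type*} [Field F] [CharZero F] (n m : ℕ)
    (X : Type*) [Fintype X] [DecidableEq X] (hX : Fintype.card X = n)
    (G : Subgroup (Equiv.Perm X)) :
    ∑ k ∈ Finset.Nat.antidiagonalTuple m n,
      (((univ.image fun f : X → Fin m =>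
              univ.filter fun g : X → Fin m => ∃ σ : G, g = f ∘ (σ : Equiv.Perm X)).filter
            fun O : Finset (X → Fin m) => ∃ f ∈ O,
              (∏ x, (MvPolynomial.X (f x) : MvPolynomial (Fin m) F)) =
                ∏ i, MvPolynomial.X i ^ k i).card : MvPolynomial (Fin m) F)
        * ∏ i, MvPolynomial.X i ^ k i
      = MvPolynomial.C ((Fintype.card G : F)⁻¹) *
          ∑ σ : G,
            Zmon n (σ : Equiv.Perm X)
              (fun j => ∑ i : Fin m, (MvPolynomial.X i : MvPolynomial (Fin m) F) ^ (j.1 + 1)) := by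
  -- `σ • f = f ∘ σ⁻¹`, whose orbits are the sets `{f ∘ σ | σ ∈ G}` of the statement
  let _ : MulAction G (X → Fin m) := arrowAction
  set W : (X → Fin m) → MvPolynomial (Fin m) F := fun f => ∏ x, MvPolynomial.X (f x)
  -- the contribution of an orbit `O` to the left-hand side, with the sums over `k` and `O` swapped
  set φ : Finset (X → Fin m) → MvPolynomial (Fin m) F := fun O =>
    ∑ k ∈ Nat.antidiagonalTuple m n,
      if ∃ f ∈ O, W f = ∏ i, MvPolynomial.X i ^ k i
        then ∏ i, (MvPolynomial.X i : MvPolynomial (Fin m) F) ^ k i else 0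
  have horbit_weight : ∀ f, φ (MulAction.orbit G f).toFinset = W f := fun f =>
    MvPolynomial.sum_antidiagonalTuple_ite_exists_prod_X hX
      (Set.mem_toFinset.mpr (MulAction.mem_orbit_self f)) fun g hg => by
        obtain ⟨σ, rfl⟩ := Set.mem_toFinset.mp hg
        exact MulAction.prod_apply_smul _ σ f
  have hfixed : ∀ σ : G, ∑ f ∈ univ.filter (fun f : X → Fin m => σ • f = f), W f
      = Zmon n (σ : Equiv.Perm X)
          (fun j => ∑ i : Fin m, (MvPolynomial.X i : MvPolynomial (Fin m) F) ^ (j.1 + 1)) :=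
    fun σ => (σ : Equiv.Perm X).sum_fixed_prod_eq_Zmon hX _
  have hburnside := MulAction.sum_sum_fixedBy_eq_card_smul_sum_orbits (G := G) φ
  simp only [horbit_weight, hfixed] at hburnside
  simp only [Subgroup.filter_exists_comp_eq_toFinset_orbit, natCast_card_filter, sum_mul,
    ite_mul, one_mul, zero_mul]
  rw [sum_comm, hburnside, nsmul_eq_mul, ← mul_assoc, ← map_natCast MvPolynomial.C, ← map_mul,
    inv_mul_cancel₀ (Nat.cast_ne_zero.mpr Fintype.card_ne_zero), map_one, one_mul]
end
end
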